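/- The marginal observed density of x in the random effects publication bias model, f(x | θ₀, τ, σ) ∝ φ(x; θ₀, √(τ²+σ²)) w(u(x)), is in general not equal to ∫ f(x; θ, σ) φ(θ; θ₀, τ) dθ, where f(x; θ, σ) ∝ φ(x; θ, σ) w(u(x)) is the fixed-effects publication bias density. Concretely, there exist θ₀, τ, σ and a nonconstant step function w such that these two functions of x differ. -/

import Mathlib

open MeasureTheory Set

/-- The density of `N(θ, σ²)`. -/
noncomputable def normpdf (θ σ x : ℝ) : ℝ :=
  (σ * Real.sqrt (2 * Real.pi))⁻¹ * Real.exp (-(x - θ) ^ 2 / (2 * σ ^ 2))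

/-- The standard normal CDF `Φ`. -/
noncomputable def Phi (x : ℝ) : ℝ := ∫ t in Set.Iic x, normpdf 0 1 t

/-!
Write `D t = ∫ φ(y; t, σ) W y dy` for the per-`θ` normalizer and `C` for the joint one. Since
`N(θ₀, τ²) ∗ N(0, σ²) = N(θ₀, τ² + σ²)`, `C = E D(θ)` for `θ ~ N(θ₀, τ²)`. If the two densities
agreed at every `x`, cancelling `W x` and integrating over `x` would give `1 / C = E (1 / D(θ))`,
the equality case of `E D · E (1 / D) ≥ 1`, so `D` would be a.e. constant. But by dominated
convergence `D` tends to the limits of `W` at `±∞`, which for a nonconstant step selection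
function are `1` and `ρ₂`.
-/

open Filter Topology ProbabilityTheory

section Normpdf

variable (θ : ℝ) {σ : ℝ} (hσ : 0 < σ)
include hσ

lemma normpdf_eq_gaussianPDFReal : normpdf θ σ = gaussianPDFReal θ (σ ^ 2).toNNReal := by
  funext x
  rw [gaussianPDFReal_def, Real.coe_toNNReal _ (sq_nonneg σ), mul_comm (2 * Real.pi),
    Real.sqrt_mul (sq_nonneg σ), Real.sqrt_sq hσ.le, normpdf]

lemma toNNReal_sq_ne_zero : (σ ^ 2).toNNReal ≠ 0 := by
  simpa using hσ.ne'

lemma integrable_normpdf : Integrable (normpdf θ σ) := by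
  rw [normpdf_eq_gaussianPDFReal θ hσ]
  exact integrable_gaussianPDFReal _ _

lemma integral_normpdf : ∫ x, normpdf θ σ x = 1 := by
  rw [normpdf_eq_gaussianPDFReal θ hσ]
  exact integral_gaussianPDFReal_eq_one θ (toNNReal_sq_ne_zero hσ)

lemma integral_normpdf_mul (f : ℝ → ℝ) :
    ∫ x, normpdf θ σ x * f x = ∫ x, f x ∂gaussianReal θ (σ ^ 2).toNNReal := by
  rw [integral_gaussianReal_eq_integral_smul (toNNReal_sq_ne_zero hσ),
    normpdf_eq_gaussianPDFReal θ hσ]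
  rfl

end Normpdf

lemma normpdf_nonneg (θ : ℝ) {σ : ℝ} (hσ : 0 < σ) (x : ℝ) : 0 ≤ normpdf θ σ x := by
  unfold normpdf
  positivity

lemma Phi_eq_cdf : Phi = cdf (gaussianReal 0 1) := by
  funext x
  have h1 : (1 : NNReal) = ((1 : ℝ) ^ 2).toNNReal := by simp
  rw [cdf_eq_real, measureReal_def, h1,
    gaussianReal_apply_eq_integral _ (toNNReal_sq_ne_zero one_pos), ENNReal.toReal_ofReal
      (setIntegral_nonneg measurableSet_Iic fun _ _ => gaussianPDFReal_nonneg _ _ _),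
    ← normpdf_eq_gaussianPDFReal 0 one_pos, Phi]

lemma tendsto_Phi_atTop : Tendsto Phi atTop (𝓝 1) := Phi_eq_cdf ▸ tendsto_cdf_atTop _

lemma tendsto_Phi_atBot : Tendsto Phi atBot (𝓝 0) := Phi_eq_cdf ▸ tendsto_cdf_atBot _

lemma measurable_Phi : Measurable Phi := Phi_eq_cdf ▸ (cdf _).mono.measurable

lemma ae_eq_integral_of_integral_mul_integral_inv_eq_one {α : Type*} [MeasurableSpace α]
    {μ : Measure α} [IsProbabilityMeasure μ] {f : α → ℝ} {a b : ℝ}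
    (hf : AEMeasurable f μ) (ha : 0 < a) (haf : ∀ x, a ≤ f x) (hfb : ∀ x, f x ≤ b)
    (h : (∫ x, f x ∂μ) * ∫ x, (f x)⁻¹ ∂μ = 1) : f =ᵐ[μ] fun _ => ∫ x, f x ∂μ := by
  set c := ∫ x, f x ∂μ with hc
  have hpos : ∀ x, 0 < f x := fun x => ha.trans_le (haf x)
  have hfi : Integrable f μ :=
    .of_bound hf.aestronglyMeasurable b (ae_of_all _ fun x => by
      rw [Real.norm_of_nonneg (hpos x).le]; exact hfb x)
  have hfi' : Integrable (fun x => (f x)⁻¹) μ :=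
    .of_bound hf.inv.aestronglyMeasurable a⁻¹ (ae_of_all _ fun x => by
      rw [norm_inv, Real.norm_of_nonneg (hpos x).le]; exact inv_anti₀ ha (haf x))
  -- `(f - c)² / f = f - 2c + c² / f` integrates to `c - 2c + c = 0`
  have hexpand : (fun x => (f x - c) ^ 2 / f x) = fun x => f x - 2 * c + c ^ 2 * (f x)⁻¹ := by
    funext x
    field_simp [(hpos x).ne']
    ring
  have hzero : ∫ x, (f x - c) ^ 2 / f x ∂μ = 0 := by
    have hsub : Integrable (fun x => f x - 2 * c) μ := hfi.sub (integrable_const _)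
    rw [hexpand, integral_add hsub (hfi'.const_mul _), integral_sub hfi (integrable_const _),
      integral_const, probReal_univ, one_smul, integral_const_mul, ← hc]
    linear_combination c * h
  have hint : Integrable (fun x => (f x - c) ^ 2 / f x) μ := by
    rw [hexpand]
    exact (hfi.sub (integrable_const (2 * c))).add (hfi'.const_mul _)
  filter_upwards [(integral_eq_zero_iff_of_nonneg
    (fun x => div_nonneg (sq_nonneg _) (hpos x).le) hint).1 hzero] with x hx
  simpa [sub_eq_zero, (hpos x).ne'] using hx

lemma eq_of_tendsto_of_ae_eq_const {l : Filter ℝ} (hl : ∀ s ∈ l, volume s ≠ 0) {f : ℝ → ℝ}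
    {c L : ℝ} (hf : f =ᵐ[volume] fun _ => c) (hL : Tendsto f l (𝓝 L)) : L = c :=
  tendsto_nhds_unique_of_frequently_eq hL tendsto_const_nhds fun hne =>
    hl _ hne (ae_iff.1 hf)

lemma volume_ne_zero_of_mem_atTop {s : Set ℝ} (hs : s ∈ atTop) : volume s ≠ 0 := by
  obtain ⟨a, ha⟩ := mem_atTop_sets.1 hs
  exact ne_bot_of_le_ne_bot (by simp) (measure_mono (μ := volume) (s := Ici a) ha)

lemma volume_ne_zero_of_mem_atBot {s : Set ℝ} (hs : s ∈ atBot) : volume s ≠ 0 := by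
  obtain ⟨a, ha⟩ := mem_atBot_sets.1 hs
  exact ne_bot_of_le_ne_bot (by simp) (measure_mono (μ := volume) (s := Iic a) ha)

lemma tendsto_integral_comp_add {ν : Measure ℝ} [IsProbabilityMeasure ν] {l : Filter ℝ}
    [l.IsCountablyGenerated] (hl : ∀ z, Tendsto (· + z) l l) {W : ℝ → ℝ} (hW : Measurable W)
    {b L : ℝ} (hWb : ∀ y, |W y| ≤ b) (hL : Tendsto W l (𝓝 L)) :
    Tendsto (fun t => ∫ z, W (t + z) ∂ν) l (𝓝 L) := by
  simpa using tendsto_integral_filter_of_dominated_convergence (μ := ν)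
    (F := fun t z => W (t + z)) (fun _ => b)
    (Eventually.of_forall fun t => (hW.comp (measurable_const_add t)).aestronglyMeasurable)
    (Eventually.of_forall fun t => ae_of_all _ fun z => hWb _) (integrable_const b)
    (ae_of_all _ fun z => hL.comp (hl z))

section Model

variable {σ : ℝ} (hσ : 0 < σ) {W : ℝ → ℝ}
include hσ

lemma integral_normpdf_mul_eq_integral_comp_add (t : ℝ) :
    ∫ y, normpdf t σ y * W y = ∫ z, W (t + z) ∂gaussianReal 0 (σ ^ 2).toNNReal := by
  rw [integral_normpdf_mul t hσ, ← zero_add t, ← gaussianReal_map_const_add t, zero_add]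
  exact integral_map_equiv (MeasurableEquiv.addLeft t) W

lemma integral_normpdf_mul_mem_Icc (hW : Measurable W) {a b : ℝ} (haW : ∀ y, a ≤ W y)
    (hWb : ∀ y, W y ≤ b) (t : ℝ) : ∫ y, normpdf t σ y * W y ∈ Icc a b := by
  have hi : Integrable W (gaussianReal t (σ ^ 2).toNNReal) :=
    .of_bound hW.aestronglyMeasurable (max |a| |b|) (ae_of_all _ fun y =>
      abs_le_max_abs_abs (haW y) (hWb y))
  rw [integral_normpdf_mul t hσ]
  constructor
  · simpa using integral_mono (integrable_const a) hi haW
  · simpa using integral_mono hi (integrable_const b) hWb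

lemma measurable_integral_normpdf_mul (hW : Measurable W) :
    Measurable fun t => ∫ y, normpdf t σ y * W y := by
  simp_rw [integral_normpdf_mul_eq_integral_comp_add hσ]
  exact (hW.comp measurable_add).stronglyMeasurable.integral_prod_right'.measurable

end Model

section Mixture

variable (θ₀ : ℝ) {τ σ : ℝ} (hτ : 0 < τ) (hσ : 0 < σ)
include hτ hσ

lemma integral_marginal_mul_eq_integral_integral {W : ℝ → ℝ} (hW : Measurable W) {b : ℝ}
    (hWb : ∀ y, |W y| ≤ b) :
    ∫ y, normpdf θ₀ (Real.sqrt (τ ^ 2 + σ ^ 2)) y * W y =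
      ∫ t, (∫ y, normpdf t σ y * W y) ∂gaussianReal θ₀ (τ ^ 2).toNNReal := by
  have hvar : (Real.sqrt (τ ^ 2 + σ ^ 2) ^ 2).toNNReal = (τ ^ 2).toNNReal + (σ ^ 2).toNNReal := by
    rw [Real.sq_sqrt (by positivity), Real.toNNReal_add (sq_nonneg τ) (sq_nonneg σ)]
  rw [integral_normpdf_mul θ₀ (Real.sqrt_pos.2 (by positivity)), hvar, ← add_zero θ₀,
    ← gaussianReal_conv_gaussianReal, integral_conv (.of_bound hW.aestronglyMeasurable b
      (ae_of_all _ hWb))]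
  simp_rw [integral_normpdf_mul_eq_integral_comp_add hσ, add_zero]

lemma integral_integral_normpdf_mul_normpdf {g : ℝ → ℝ} (hg : Measurable g) {b : ℝ}
    (hgb : ∀ t, |g t| ≤ b) :
    ∫ x, ∫ t, normpdf t σ x * g t * normpdf θ₀ τ t =
      ∫ t, g t ∂gaussianReal θ₀ (τ ^ 2).toNNReal := by
  have hmeas : AEStronglyMeasurable
      (Function.uncurry fun x t => normpdf t σ x * g t * normpdf θ₀ τ t) (volume.prod volume) := by
    unfold Function.uncurry normpdf
    fun_prop
  have hint : Integrable
      (Function.uncurry fun x t => normpdf t σ x * g t * normpdf θ₀ τ t) (volume.prod volume) := by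
    refine (integrable_prod_iff' hmeas).2 ⟨ae_of_all _ fun t =>
      ((integrable_normpdf t hσ).mul_const (g t)).mul_const (normpdf θ₀ τ t), ?_⟩
    have hnorm : ∀ t, ∫ x, ‖normpdf t σ x * g t * normpdf θ₀ τ t‖ = |g t| * normpdf θ₀ τ t := by
      intro t
      simp_rw [norm_mul, Real.norm_of_nonneg (normpdf_nonneg _ hσ _),
        Real.norm_of_nonneg (normpdf_nonneg _ hτ _), mul_assoc]
      rw [integral_mul_const, integral_normpdf t hσ, one_mul, Real.norm_eq_abs]
    simp_rw [Function.uncurry_apply_pair, hnorm]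
    exact (integrable_normpdf θ₀ hτ).bdd_mul hg.abs.aestronglyMeasurable
      (ae_of_all _ fun t => by simpa using hgb t)
  rw [integral_integral_swap hint, ← integral_normpdf_mul θ₀ hτ]
  congr 1
  funext t
  rw [integral_mul_const, integral_mul_const, integral_normpdf t hσ, one_mul, mul_comm]

end Mixture

lemma normalizer_ae_eq_of_marginal_eq_mixture (θ₀ : ℝ) {τ σ : ℝ} (hτ : 0 < τ) (hσ : 0 < σ)
    {W : ℝ → ℝ} (hW : Measurable W) {a b : ℝ} (ha : 0 < a) (haW : ∀ y, a ≤ W y)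
    (hWb : ∀ y, W y ≤ b)
    (h : ∀ x, normpdf θ₀ (Real.sqrt (τ ^ 2 + σ ^ 2)) x * W x /
        (∫ y, normpdf θ₀ (Real.sqrt (τ ^ 2 + σ ^ 2)) y * W y) =
      ∫ t, normpdf t σ x * W x / (∫ y, normpdf t σ y * W y) * normpdf θ₀ τ t) :
    (fun t => ∫ y, normpdf t σ y * W y) =ᵐ[volume]
      fun _ => ∫ y, normpdf θ₀ (Real.sqrt (τ ^ 2 + σ ^ 2)) y * W y := by
  set D := fun t => ∫ y, normpdf t σ y * W y
  set C := ∫ y, normpdf θ₀ (Real.sqrt (τ ^ 2 + σ ^ 2)) y * W y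
  have hs : 0 < Real.sqrt (τ ^ 2 + σ ^ 2) := Real.sqrt_pos.2 (by positivity)
  have hWabs : ∀ y, |W y| ≤ max |a| |b| := fun y => abs_le_max_abs_abs (haW y) (hWb y)
  have hD : ∀ t, D t ∈ Icc a b := integral_normpdf_mul_mem_Icc hσ hW haW hWb
  have hDmeas : Measurable D := measurable_integral_normpdf_mul hσ hW
  have hC : C = ∫ t, D t ∂gaussianReal θ₀ (τ ^ 2).toNNReal :=
    integral_marginal_mul_eq_integral_integral θ₀ hτ hσ hW hWabs
  have hpointwise : ∀ x, normpdf θ₀ (Real.sqrt (τ ^ 2 + σ ^ 2)) x / C =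
      ∫ t, normpdf t σ x * (D t)⁻¹ * normpdf θ₀ τ t := by
    intro x
    have hWx : W x ≠ 0 := (ha.trans_le (haW x)).ne'
    apply mul_left_cancel₀ hWx
    rw [← integral_const_mul, mul_div_assoc', mul_comm (W x), h x]
    congr 1
    funext t
    ring
  have hCinv : C⁻¹ = ∫ t, (D t)⁻¹ ∂gaussianReal θ₀ (τ ^ 2).toNNReal := by
    rw [← integral_integral_normpdf_mul_normpdf θ₀ hτ hσ (g := fun t => (D t)⁻¹) hDmeas.inv
      (b := a⁻¹), ← one_div, ← integral_normpdf θ₀ hs, ← integral_div]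
    · simp_rw [hpointwise]
    · intro t
      rw [abs_inv, abs_of_pos (ha.trans_le (hD t).1)]
      exact inv_anti₀ ha (hD t).1
  have hCpos : 0 < C := ha.trans_le (integral_normpdf_mul_mem_Icc hs hW haW hWb θ₀).1
  have hae := ae_eq_integral_of_integral_mul_integral_inv_eq_one hDmeas.aemeasurable ha
    (fun t => (hD t).1) (fun t => (hD t).2) (by rw [← hC, ← hCinv, mul_inv_cancel₀ hCpos.ne'])
  rw [← hC] at hae
  exact (gaussianReal_absolutelyContinuous' θ₀ (toNNReal_sq_ne_zero hτ)).ae_eq hae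

theorem exists_marginal_ne_mixture (θ₀ : ℝ) {τ σ : ℝ} (hτ : 0 < τ) (hσ : 0 < σ)
    {W : ℝ → ℝ} (hW : Measurable W) {a b : ℝ} (ha : 0 < a) (haW : ∀ y, a ≤ W y)
    (hWb : ∀ y, W y ≤ b) {L₁ L₂ : ℝ} (hL₁ : Tendsto W atTop (𝓝 L₁))
    (hL₂ : Tendsto W atBot (𝓝 L₂)) (hL : L₁ ≠ L₂) :
    ∃ x, normpdf θ₀ (Real.sqrt (τ ^ 2 + σ ^ 2)) x * W x /
        (∫ y, normpdf θ₀ (Real.sqrt (τ ^ 2 + σ ^ 2)) y * W y) ≠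
      ∫ t, normpdf t σ x * W x / (∫ y, normpdf t σ y * W y) * normpdf θ₀ τ t := by
  by_contra! h
  have hae := normalizer_ae_eq_of_marginal_eq_mixture θ₀ hτ hσ hW ha haW hWb h
  have hWabs : ∀ y, |W y| ≤ max |a| |b| := fun y => abs_le_max_abs_abs (haW y) (hWb y)
  simp_rw [integral_normpdf_mul_eq_integral_comp_add hσ] at hae
  refine hL ((eq_of_tendsto_of_ae_eq_const (fun _ => volume_ne_zero_of_mem_atTop) hae ?_).trans
    (eq_of_tendsto_of_ae_eq_const (fun _ => volume_ne_zero_of_mem_atBot) hae ?_).symm)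
  · exact tendsto_integral_comp_add (fun z => tendsto_atTop_add_const_right _ z tendsto_id) hW
      hWabs hL₁
  · exact tendsto_integral_comp_add (fun z => tendsto_atBot_add_const_right _ z tendsto_id) hW
      hWabs hL₂

/-- `w (u x)` for the one-sided p-value `u x = 1 - Φ (x / σ)` and the step `w` at `0.05`. -/
noncomputable def stepSelection (σ ρ x : ℝ) : ℝ := if 1 - Phi (x / σ) ≤ 0.05 then 1 else ρ

lemma measurable_stepSelection (σ ρ : ℝ) : Measurable (stepSelection σ ρ) :=
  Measurable.ite (measurableSet_le
    (measurable_const.sub (measurable_Phi.comp (measurable_id.div_const σ))) measurable_const)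
    measurable_const measurable_const

section StepSelection

variable {σ : ℝ} (hσ : 0 < σ) (ρ : ℝ)
include hσ

lemma stepSelection_eventuallyEq_atTop : stepSelection σ ρ =ᶠ[atTop] fun _ => 1 := by
  have h : Tendsto (fun x => 1 - Phi (x / σ)) atTop (𝓝 (1 - 1)) :=
    tendsto_const_nhds.sub (tendsto_Phi_atTop.comp (tendsto_id.atTop_div_const hσ))
  filter_upwards [(sub_self (1 : ℝ) ▸ h).eventually (ge_mem_nhds (by norm_num : (0 : ℝ) < 0.05))]
    with x hx
  exact if_pos hx

lemma stepSelection_eventuallyEq_atBot : stepSelection σ ρ =ᶠ[atBot] fun _ => ρ := by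
  have h : Tendsto (fun x => 1 - Phi (x / σ)) atBot (𝓝 (1 - 0)) :=
    tendsto_const_nhds.sub (tendsto_Phi_atBot.comp (tendsto_id.atBot_div_const hσ))
  filter_upwards [(sub_zero (1 : ℝ) ▸ h).eventually (lt_mem_nhds (by norm_num : (0.05 : ℝ) < 1))]
    with x hx
  exact if_neg hx.not_ge

end StepSelection

/-- The marginal observed density of the random effects publication bias model,
`f(x|θ₀,τ,σ) ∝ φ(x; θ₀, √(τ²+σ²)) w(u(x))`, is in general not the mixture over
`θ ~ N(θ₀, τ²)` of the per-`θ` normalized fixed-effects publication bias densities: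
there are parameters `θ₀, τ, σ` and a nonconstant step selection probability `w`
(a two-valued step function with second level `ρ₂ ∈ (0,1)`) for which the two
functions of `x` differ somewhere. -/
theorem stmt7 :
    ∃ (θ₀ τ σ ρ₂ : ℝ), 0 < τ ∧ 0 < σ ∧ 0 < ρ₂ ∧ ρ₂ < 1 ∧
      let u : ℝ → ℝ := fun x => 1 - Phi (x / σ)
      let w : ℝ → ℝ := fun t => if t ≤ 0.05 then 1 else ρ₂
      let s2 : ℝ := Real.sqrt (τ ^ 2 + σ ^ 2)
      ∃ x : ℝ,
        normpdf θ₀ s2 x * w (u x) / (∫ y, normpdf θ₀ s2 y * w (u y)) ≠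
          ∫ t, normpdf t σ x * w (u x) / (∫ y, normpdf t σ y * w (u y)) *
            normpdf θ₀ τ t := by
  refine ⟨0, 1, 1, 1 / 2, one_pos, one_pos, by norm_num, by norm_num, ?_⟩
  have hbounds : ∀ y, 1 / 2 ≤ stepSelection 1 (1 / 2) y ∧ stepSelection 1 (1 / 2) y ≤ 1 := by
    intro y
    unfold stepSelection
    split_ifs <;> norm_num
  exact exists_marginal_ne_mixture 0 one_pos one_pos (measurable_stepSelection 1 (1 / 2))
    (by norm_num) (fun y => (hbounds y).1) (fun y => (hbounds y).2)
    (tendsto_const_nhds.congr' (stepSelection_eventuallyEq_atTop one_pos _).symm)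
    (tendsto_const_nhds.congr' (stepSelection_eventuallyEq_atBot one_pos _).symm) (by norm_num)
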